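/- Let d ≥ 1, p > 1, λ > 0, B > 0, and let W : ℝ^d → ℝ be a function of class C² with inf_{ℝ^d} W > 0, D²W(x) ≥ λ⟨x⟩^{p−2} Id for all x, and |∇W(x)| ≤ B⟨x⟩^{p−1} for all x. Then there exist constants 0 < c ≤ C such that for every x ∈ ℝ^d: c⟨x⟩^p ≤ W(x) ≤ C⟨x⟩^p and c⟨x⟩^{p−1} ≤ 1 + |∇W(x)| ≤ C⟨x⟩^{p−1}. -/

import Mathlib

/-!
Along a ray `t ↦ W (t • x)` the radial derivative `⟪∇W (t • x), x⟫` is nondecreasing, since the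
Hessian is positive semidefinite, and for `t ∈ [1/2, 1]`, where `⟨t x⟩` and `⟨x⟩` agree up to a
factor `2`, it grows at rate `≳ ⟨x⟩^(p-2) |x|² = ⟨x⟩^p - ⟨x⟩^(p-2)`. Integrating once and twice
gives `⟨x⟩ |∇W x| ≥ ⟪∇W x, x⟫ ≳ ⟨x⟩^p` and `W x ≳ ⟨x⟩^p` up to terms of order `⟨x⟩^max(1, p-2)`,
which are absorbed for large `⟨x⟩`; for bounded `⟨x⟩`, `W ≥ inf W > 0` and `1 + |∇W| ≥ 1` suffice.
The upper bounds follow from the gradient bound and the mean value inequality.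
-/

open scoped RealInnerProductSpace
open InnerProductSpace Set

theorem exists_pos_mul_rpow_le_max_sub_mul_rpow {q r a m : ℝ} (hq : 0 ≤ q) (hrq : r < q)
    (ha : 0 < a) (hm : 0 < m) (b : ℝ) :
    ∃ c > 0, ∀ s ≥ 1, c * s ^ q ≤ max m (a * s ^ q - b * s ^ r) := by
  set s₀ := max 1 ((2 * |b| / a) ^ (q - r)⁻¹)
  have hs₀ : 0 < s₀ := lt_of_lt_of_le one_pos (le_max_left _ _)
  refine ⟨min (a / 2) (m / s₀ ^ q), lt_min (by positivity) (by positivity), fun s hs => ?_⟩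
  have hs0 : 0 < s := lt_of_lt_of_le one_pos hs
  rcases le_total s s₀ with hss₀ | hs₀s
  · calc min (a / 2) (m / s₀ ^ q) * s ^ q ≤ m / s₀ ^ q * s ^ q :=
          mul_le_mul_of_nonneg_right (min_le_right _ _) (by positivity)
      _ ≤ m := by
          rw [div_mul_eq_mul_div, div_le_iff₀ (by positivity)]
          exact mul_le_mul_of_nonneg_left (Real.rpow_le_rpow hs0.le hss₀ hq) hm.le
      _ ≤ _ := le_max_left _ _
  · have hgap : 2 * |b| / a ≤ s ^ (q - r) :=
      calc 2 * |b| / a = ((2 * |b| / a) ^ (q - r)⁻¹) ^ (q - r) :=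
            (Real.rpow_inv_rpow (by positivity) (sub_pos.2 hrq).ne').symm
        _ ≤ s ^ (q - r) :=
            Real.rpow_le_rpow (by positivity) ((le_max_right _ _).trans hs₀s) (sub_pos.2 hrq).le
    have hsplit : s ^ q = s ^ (q - r) * s ^ r := by
      rw [← Real.rpow_add hs0, sub_add_cancel]
    have hb : b ≤ a / 2 * s ^ (q - r) := by
      rw [div_le_iff₀ ha] at hgap
      linarith [le_abs_self b]
    have hlow : b * s ^ r ≤ a / 2 * s ^ q := by
      rw [hsplit, ← mul_assoc]
      exact mul_le_mul_of_nonneg_right hb (by positivity)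
    calc min (a / 2) (m / s₀ ^ q) * s ^ q ≤ a / 2 * s ^ q :=
          mul_le_mul_of_nonneg_right (min_le_left _ _) (by positivity)
      _ ≤ a * s ^ q - b * s ^ r := by linarith
      _ ≤ _ := le_max_right _ _

theorem Real.half_rpow_abs_mul_rpow_le {s u : ℝ} (hu : 0 < u) (hsu : s ≤ 2 * u) (hus : u ≤ s)
    (r : ℝ) : (1 / 2) ^ |r| * s ^ r ≤ u ^ r := by
  rcases le_total 0 r with hr | hr
  · rw [abs_of_nonneg hr, ← Real.mul_rpow (by norm_num) (hu.le.trans hus)]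
    exact Real.rpow_le_rpow (by linarith) (by linarith) hr
  · calc (1 / 2) ^ |r| * s ^ r ≤ 1 * s ^ r :=
          mul_le_mul_of_nonneg_right
            (Real.rpow_le_one (by norm_num) (by norm_num) (abs_nonneg r))
            (Real.rpow_nonneg (hu.le.trans hus) r)
      _ ≤ u ^ r := (one_mul _).trans_le (Real.rpow_le_rpow_of_nonpos hu hus hr)

section JapaneseBracket

variable {E : Type*} [SeminormedAddCommGroup E]

theorem one_le_sqrt_one_add_norm_sq (x : E) : 1 ≤ √(1 + ‖x‖ ^ 2) :=
  Real.one_le_sqrt.2 (by nlinarith [sq_nonneg ‖x‖])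

theorem norm_le_sqrt_one_add_norm_sq (x : E) : ‖x‖ ≤ √(1 + ‖x‖ ^ 2) :=
  Real.le_sqrt_of_sq_le (by linarith)

theorem sqrt_one_add_norm_sq_le_of_norm_le {x y : E} (h : ‖x‖ ≤ ‖y‖) :
    √(1 + ‖x‖ ^ 2) ≤ √(1 + ‖y‖ ^ 2) :=
  Real.sqrt_le_sqrt (by gcongr)

theorem sqrt_one_add_norm_sq_le_two_mul {x y : E} (h : ‖y‖ ≤ 2 * ‖x‖) :
    √(1 + ‖y‖ ^ 2) ≤ 2 * √(1 + ‖x‖ ^ 2) := by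
  rw [← Real.sqrt_sq (zero_le_two : (0:ℝ) ≤ 2), ← Real.sqrt_mul (by norm_num)]
  refine Real.sqrt_le_sqrt ?_
  nlinarith [norm_nonneg y]

theorem rpow_sub_rpow_le_rpow_sub_two_mul_norm_sq (x : E) {p r : ℝ} (hr : p - 2 ≤ r) :
    √(1 + ‖x‖ ^ 2) ^ p - √(1 + ‖x‖ ^ 2) ^ r ≤ √(1 + ‖x‖ ^ 2) ^ (p - 2) * ‖x‖ ^ 2 := by
  have hs := one_le_sqrt_one_add_norm_sq x
  have hsq : √(1 + ‖x‖ ^ 2) ^ 2 = 1 + ‖x‖ ^ 2 := Real.sq_sqrt (by positivity)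
  set s := √(1 + ‖x‖ ^ 2)
  have hsplit : s ^ p = s ^ (p - 2) * s ^ 2 := by
    rw [← Real.rpow_natCast s 2, ← Real.rpow_add (by linarith)]
    norm_num
  have hle := Real.rpow_le_rpow_of_exponent_le hs hr
  rw [hsplit, hsq]
  linarith

end JapaneseBracket

section RayCalculus

variable {E : Type*} [NormedAddCommGroup E] [InnerProductSpace ℝ E] [CompleteSpace E] {W : E → ℝ}

theorem ContDiff.differentiable_gradient (hW : ContDiff ℝ 2 W) : Differentiable ℝ (gradient W) :=
  (toDual ℝ E).symm.differentiable.comp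
    ((hW.fderiv_right (m := 1) (by norm_num)).differentiable one_ne_zero)

theorem hasDerivAt_apply_smul (hW : Differentiable ℝ W) (x : E) (t : ℝ) :
    HasDerivAt (fun t : ℝ => W (t • x)) ⟪gradient W (t • x), x⟫ t := by
  rw [inner_gradient_left]
  have := (hW (t • x)).hasFDerivAt.comp_hasDerivAt t ((hasDerivAt_id t).smul_const x)
  rwa [one_smul] at this

theorem hasDerivAt_inner_gradient_smul (hW : Differentiable ℝ (gradient W)) (x : E) (t : ℝ) :
    HasDerivAt (fun t : ℝ => ⟪gradient W (t • x), x⟫)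
      ⟪fderiv ℝ (gradient W) (t • x) x, x⟫ t := by
  have := ((hW (t • x)).hasFDerivAt.comp_hasDerivAt t
    ((hasDerivAt_id t).smul_const x)).inner ℝ (hasDerivAt_const t x)
  simpa using this

theorem mul_sub_le_sub_of_hasDerivAt {f f' : ℝ → ℝ} (hf : ∀ t, HasDerivAt f (f' t) t)
    {a b C : ℝ} (hab : a ≤ b) (hC : ∀ t ∈ Ioo a b, C ≤ f' t) : C * (b - a) ≤ f b - f a :=
  (convex_Icc a b).mul_sub_le_image_sub_of_le_deriv
    (fun t _ => (hf t).continuousAt.continuousWithinAt)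
    (fun t _ => (hf t).differentiableAt.differentiableWithinAt)
    (by simpa only [interior_Icc, (hf _).deriv] using hC)
    a (left_mem_Icc.2 hab) b (right_mem_Icc.2 hab) hab

theorem monotone_inner_gradient_smul (hW : ContDiff ℝ 2 W)
    (hpsd : ∀ y v : E, 0 ≤ ⟪fderiv ℝ (gradient W) y v, v⟫) (x : E) :
    Monotone fun t : ℝ => ⟪gradient W (t • x), x⟫ :=
  have hd := hasDerivAt_inner_gradient_smul hW.differentiable_gradient x
  monotone_of_deriv_nonneg (fun t => (hd t).differentiableAt)
    (fun t => (hd t).deriv ▸ hpsd _ _)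

theorem inner_gradient_zero_add_le (hW : ContDiff ℝ 2 W)
    (hpsd : ∀ y v : E, 0 ≤ ⟪fderiv ℝ (gradient W) y v, v⟫) {x : E} {κ : ℝ}
    (hκ : ∀ t ∈ Icc (1 / 2 : ℝ) 1, κ ≤ ⟪fderiv ℝ (gradient W) (t • x) x, x⟫) :
    ⟪gradient W 0, x⟫ + κ / 2 ≤ ⟪gradient W x, x⟫ := by
  have hgrowth := mul_sub_le_sub_of_hasDerivAt
    (hasDerivAt_inner_gradient_smul hW.differentiable_gradient x) (by norm_num : (1 / 2 : ℝ) ≤ 1)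
    (fun t ht => hκ t (Ioo_subset_Icc_self ht))
  have hmono := monotone_inner_gradient_smul hW hpsd x (by norm_num : (0 : ℝ) ≤ 1 / 2)
  simp only [zero_smul, one_smul] at hgrowth hmono
  linarith

theorem apply_three_quarters_smul_add_le (hW : ContDiff ℝ 2 W)
    (hpsd : ∀ y v : E, 0 ≤ ⟪fderiv ℝ (gradient W) y v, v⟫) {x : E} {κ : ℝ}
    (hκ : ∀ t ∈ Icc (1 / 2 : ℝ) 1, κ ≤ ⟪fderiv ℝ (gradient W) (t • x) x, x⟫) :
    W ((3 / 4 : ℝ) • x) + (⟪gradient W 0, x⟫ + κ / 4) / 4 ≤ W x := by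
  have hmono := monotone_inner_gradient_smul hW hpsd x
  have hgrowth := mul_sub_le_sub_of_hasDerivAt
    (hasDerivAt_inner_gradient_smul hW.differentiable_gradient x)
    (by norm_num : (1 / 2 : ℝ) ≤ 3 / 4)
    (fun t ht => hκ t ⟨ht.1.le, by linarith [ht.2]⟩)
  have htangent := mul_sub_le_sub_of_hasDerivAt
    (hasDerivAt_apply_smul (hW.differentiable two_ne_zero) x) (by norm_num : (3 / 4 : ℝ) ≤ 1)
    (fun t ht => hmono ht.1.le)
  have h0 := hmono (by norm_num : (0 : ℝ) ≤ 1 / 2)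
  simp only [zero_smul, one_smul] at htangent h0
  linarith

end RayCalculus

section PowerGrowth

variable {E : Type*} [NormedAddCommGroup E] [InnerProductSpace ℝ E] {p lam B : ℝ}

theorem neg_mul_rpow_le_inner {v : E} (hv : ‖v‖ ≤ B) (x : E) {r : ℝ} (hr : 1 ≤ r) :
    -(B * √(1 + ‖x‖ ^ 2) ^ r) ≤ ⟪v, x⟫ := by
  have hs := one_le_sqrt_one_add_norm_sq x
  have hxs : ‖x‖ ≤ √(1 + ‖x‖ ^ 2) ^ r :=
    (norm_le_sqrt_one_add_norm_sq x).trans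
      (by simpa using Real.rpow_le_rpow_of_exponent_le hs hr)
  have hB : 0 ≤ B := (norm_nonneg v).trans hv
  nlinarith [neg_le_of_abs_le (abs_real_inner_le_norm v x), norm_nonneg v, norm_nonneg x]

theorem le_inner_fderiv_gradient_smul [CompleteSpace E] {W : E → ℝ} (hlam : 0 ≤ lam)
    (hWhess : ∀ y v : E, lam * √(1 + ‖y‖ ^ 2) ^ (p - 2) * ‖v‖ ^ 2
      ≤ ⟪fderiv ℝ (gradient W) y v, v⟫) (x : E) {t : ℝ} (ht : t ∈ Icc (1 / 2 : ℝ) 1)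
    {r : ℝ} (hr : p - 2 ≤ r) :
    lam * (1 / 2) ^ |p - 2| * (√(1 + ‖x‖ ^ 2) ^ p - √(1 + ‖x‖ ^ 2) ^ r)
      ≤ ⟪fderiv ℝ (gradient W) (t • x) x, x⟫ := by
  have hnorm : ‖t • x‖ = t * ‖x‖ := by
    rw [norm_smul, Real.norm_eq_abs, abs_of_nonneg (by linarith [ht.1] : (0 : ℝ) ≤ t)]
  have hbracket := Real.half_rpow_abs_mul_rpow_le
    (lt_of_lt_of_le one_pos (one_le_sqrt_one_add_norm_sq (t • x)))
    (sqrt_one_add_norm_sq_le_two_mul (x := t • x) (y := x)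
      (by rw [hnorm]; nlinarith [norm_nonneg x, ht.1]))
    (sqrt_one_add_norm_sq_le_of_norm_le (by rw [hnorm]; nlinarith [norm_nonneg x, ht.2]))
    (p - 2)
  calc lam * (1 / 2) ^ |p - 2| * (√(1 + ‖x‖ ^ 2) ^ p - √(1 + ‖x‖ ^ 2) ^ r)
      ≤ lam * (1 / 2) ^ |p - 2| * (√(1 + ‖x‖ ^ 2) ^ (p - 2) * ‖x‖ ^ 2) :=
        mul_le_mul_of_nonneg_left (rpow_sub_rpow_le_rpow_sub_two_mul_norm_sq x hr) (by positivity)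
    _ = lam * ((1 / 2) ^ |p - 2| * √(1 + ‖x‖ ^ 2) ^ (p - 2)) * ‖x‖ ^ 2 := by ring
    _ ≤ lam * √(1 + ‖t • x‖ ^ 2) ^ (p - 2) * ‖x‖ ^ 2 := by gcongr
    _ ≤ _ := hWhess _ _

variable [CompleteSpace E] {W : E → ℝ}

theorem exists_pos_mul_rpow_le_one_add_norm_gradient (hW : ContDiff ℝ 2 W) (hp : 1 < p)
    (hlam : 0 < lam) (hWhess : ∀ y v : E, lam * √(1 + ‖y‖ ^ 2) ^ (p - 2) * ‖v‖ ^ 2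
      ≤ ⟪fderiv ℝ (gradient W) y v, v⟫) (hW0 : ‖gradient W 0‖ ≤ B) :
    ∃ c > 0, ∀ x : E, c * √(1 + ‖x‖ ^ 2) ^ (p - 1) ≤ 1 + ‖gradient W x‖ := by
  set a := lam * (1 / 2) ^ |p - 2|
  obtain ⟨c, hc, habsorb⟩ := exists_pos_mul_rpow_le_max_sub_mul_rpow (by linarith)
    (max_lt hp (by linarith) : max 1 (p - 2) < p) (by positivity : 0 < a / 2) one_pos (B + a / 2)
  refine ⟨c, hc, fun x => ?_⟩
  set s := √(1 + ‖x‖ ^ 2)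
  have hs : 1 ≤ s := one_le_sqrt_one_add_norm_sq x
  have hconvex := inner_gradient_zero_add_le hW (fun y v => le_trans (by positivity) (hWhess y v))
    (fun t ht => le_inner_fderiv_gradient_smul hlam.le hWhess x ht (le_max_right 1 (p - 2)))
  have hzero := neg_mul_rpow_le_inner hW0 x (le_max_left 1 (p - 2))
  have hcs : ⟪gradient W x, x⟫ ≤ ‖gradient W x‖ * s :=
    (real_inner_le_norm _ _).trans
      (mul_le_mul_of_nonneg_left (norm_le_sqrt_one_add_norm_sq x) (norm_nonneg _))
  have hmul : c * s ^ p ≤ (1 + ‖gradient W x‖) * s := by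
    refine (habsorb s hs).trans (max_le ?_ (by linarith))
    nlinarith [norm_nonneg (gradient W x)]
  rwa [Real.rpow_sub_one (by positivity), mul_div_assoc', div_le_iff₀ (by positivity)]

theorem exists_pos_mul_rpow_le_apply (hW : ContDiff ℝ 2 W) (hp : 1 < p)
    (hlam : 0 < lam) (hWhess : ∀ y v : E, lam * √(1 + ‖y‖ ^ 2) ^ (p - 2) * ‖v‖ ^ 2
      ≤ ⟪fderiv ℝ (gradient W) y v, v⟫) (hW0 : ‖gradient W 0‖ ≤ B)
    (hWinf : ∃ m > 0, ∀ x, m ≤ W x) :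
    ∃ c > 0, ∀ x : E, c * √(1 + ‖x‖ ^ 2) ^ p ≤ W x := by
  obtain ⟨m, hm, hmW⟩ := hWinf
  set a := lam * (1 / 2) ^ |p - 2|
  obtain ⟨c, hc, habsorb⟩ := exists_pos_mul_rpow_le_max_sub_mul_rpow (by linarith)
    (max_lt hp (by linarith) : max 1 (p - 2) < p) (by positivity : 0 < a / 16) hm
    (B / 4 + a / 16)
  refine ⟨c, hc, fun x => (habsorb _ (one_le_sqrt_one_add_norm_sq x)).trans (max_le (hmW x) ?_)⟩
  have hconvex := apply_three_quarters_smul_add_le hW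
    (fun y v => le_trans (by positivity) (hWhess y v))
    (fun t ht => le_inner_fderiv_gradient_smul hlam.le hWhess x ht (le_max_right 1 (p - 2)))
  have hzero := neg_mul_rpow_le_inner hW0 x (le_max_left 1 (p - 2))
  linarith [hmW ((3 / 4 : ℝ) • x)]

theorem apply_le_mul_rpow (hW : Differentiable ℝ W) (hp : 1 ≤ p) (hB : 0 ≤ B) (h0 : 0 ≤ W 0)
    (hWgrad : ∀ y : E, ‖gradient W y‖ ≤ B * √(1 + ‖y‖ ^ 2) ^ (p - 1)) (x : E) :
    W x ≤ (W 0 + B) * √(1 + ‖x‖ ^ 2) ^ p := by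
  set s := √(1 + ‖x‖ ^ 2)
  have hs : 1 ≤ s := one_le_sqrt_one_add_norm_sq x
  have hbound : ∀ z ∈ Metric.closedBall (0 : E) ‖x‖, ‖fderiv ℝ W z‖ ≤ B * s ^ (p - 1) := by
    intro z hz
    rw [← toDual_gradient, LinearIsometryEquiv.norm_map]
    refine (hWgrad z).trans ?_
    gcongr
    exact sqrt_one_add_norm_sq_le_of_norm_le (mem_closedBall_zero_iff.1 hz)
  have hmvt := (convex_closedBall (0 : E) ‖x‖).norm_image_sub_le_of_norm_fderiv_le
    (fun z _ => hW z) hbound (Metric.mem_closedBall_self (norm_nonneg x))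
    (mem_closedBall_zero_iff.2 le_rfl)
  rw [sub_zero, Real.norm_eq_abs] at hmvt
  have hsp : s ^ p = s ^ (p - 1) * s := by
    rw [Real.rpow_sub_one (by positivity), div_mul_cancel₀ _ (by positivity)]
  calc W x ≤ W 0 + B * s ^ (p - 1) * ‖x‖ := by linarith [le_abs_self (W x - W 0)]
    _ ≤ W 0 + B * s ^ (p - 1) * s := by gcongr; exact norm_le_sqrt_one_add_norm_sq x
    _ = W 0 + B * s ^ p := by rw [hsp, mul_assoc]
    _ ≤ (W 0 + B) * s ^ p := by nlinarith [Real.one_le_rpow hs (by linarith : 0 ≤ p)]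

end PowerGrowth

theorem power_comparison_of_uniformly_convex_general
    (d : ℕ) (p lam B : ℝ) (hp : 1 < p) (hlam : 0 < lam) (hB : 0 < B)
    (W : EuclideanSpace ℝ (Fin d) → ℝ) (hW2 : ContDiff ℝ 2 W)
    (hWinf : ∃ m > 0, ∀ x, m ≤ W x)
    (hWhess : ∀ (x : EuclideanSpace ℝ (Fin d)) (v : EuclideanSpace ℝ (Fin d)),
      lam * Real.sqrt (1 + ‖x‖ ^ 2) ^ (p - 2) * ‖v‖ ^ 2
        ≤ ⟪fderiv ℝ (fun y => gradient W y) x v, v⟫)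
    (hWgrad : ∀ x, ‖gradient W x‖ ≤ B * Real.sqrt (1 + ‖x‖ ^ 2) ^ (p - 1)) :
    ∃ c C : ℝ, 0 < c ∧ c ≤ C ∧ ∀ x : EuclideanSpace ℝ (Fin d),
      c * Real.sqrt (1 + ‖x‖ ^ 2) ^ p ≤ W x ∧
      W x ≤ C * Real.sqrt (1 + ‖x‖ ^ 2) ^ p ∧
      c * Real.sqrt (1 + ‖x‖ ^ 2) ^ (p - 1) ≤ 1 + ‖gradient W x‖ ∧
      1 + ‖gradient W x‖ ≤ C * Real.sqrt (1 + ‖x‖ ^ 2) ^ (p - 1) := by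
  have hW0 : ‖gradient W 0‖ ≤ B := by simpa using hWgrad 0
  obtain ⟨c₁, hc₁, hval⟩ := exists_pos_mul_rpow_le_apply hW2 hp hlam hWhess hW0 hWinf
  obtain ⟨c₂, hc₂, hgrad⟩ :=
    exists_pos_mul_rpow_le_one_add_norm_gradient hW2 hp hlam hWhess hW0
  obtain ⟨m, hm, hmW⟩ := hWinf
  set C := max (min c₁ c₂) (max (W 0 + B) (1 + B))
  refine ⟨min c₁ c₂, C, lt_min hc₁ hc₂, le_max_left _ _, fun x => ⟨?_, ?_, ?_, ?_⟩⟩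
  · exact (mul_le_mul_of_nonneg_right (min_le_left _ _) (by positivity)).trans (hval x)
  · calc W x ≤ (W 0 + B) * √(1 + ‖x‖ ^ 2) ^ p :=
          apply_le_mul_rpow (hW2.differentiable two_ne_zero) hp.le hB.le (hm.le.trans (hmW 0))
            hWgrad x
      _ ≤ C * √(1 + ‖x‖ ^ 2) ^ p := by gcongr; exact (le_max_left _ _).trans (le_max_right _ _)
  · exact (mul_le_mul_of_nonneg_right (min_le_right _ _) (by positivity)).trans (hgrad x)
  · have hs := Real.one_le_rpow (one_le_sqrt_one_add_norm_sq x) (by linarith : 0 ≤ p - 1)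
    calc 1 + ‖gradient W x‖ ≤ (1 + B) * √(1 + ‖x‖ ^ 2) ^ (p - 1) := by
          nlinarith [hWgrad x]
      _ ≤ C * √(1 + ‖x‖ ^ 2) ^ (p - 1) := by
          gcongr; exact (le_max_right _ _).trans (le_max_right _ _)

/-- The two-sided power comparison `W ∼ ⟨·⟩^p` and `1+|∇W| ∼ ⟨·⟩^{p-1}`
established in Section 3.4. -/
theorem power_comparison_of_uniformly_convex
    (d : ℕ) (hd : 1 ≤ d) (p lam B : ℝ) (hp : 1 < p) (hlam : 0 < lam) (hB : 0 < B)
    (W : EuclideanSpace ℝ (Fin d) → ℝ) (hW2 : ContDiff ℝ 2 W)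
    (hWinf : ∃ m > 0, ∀ x, m ≤ W x)
    (hWhess : ∀ (x : EuclideanSpace ℝ (Fin d)) (v : EuclideanSpace ℝ (Fin d)),
      lam * Real.sqrt (1 + ‖x‖ ^ 2) ^ (p - 2) * ‖v‖ ^ 2
        ≤ ⟪fderiv ℝ (fun y => gradient W y) x v, v⟫)
    (hWgrad : ∀ x, ‖gradient W x‖ ≤ B * Real.sqrt (1 + ‖x‖ ^ 2) ^ (p - 1)) :
    ∃ c C : ℝ, 0 < c ∧ c ≤ C ∧ ∀ x : EuclideanSpace ℝ (Fin d),
      c * Real.sqrt (1 + ‖x‖ ^ 2) ^ p ≤ W x ∧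
      W x ≤ C * Real.sqrt (1 + ‖x‖ ^ 2) ^ p ∧
      c * Real.sqrt (1 + ‖x‖ ^ 2) ^ (p - 1) ≤ 1 + ‖gradient W x‖ ∧
      1 + ‖gradient W x‖ ≤ C * Real.sqrt (1 + ‖x‖ ^ 2) ^ (p - 1) :=
  power_comparison_of_uniformly_convex_general d p lam B hp hlam hB W hW2 hWinf hWhess hWgrad
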